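/- Inf-sup from two constructions: Let Σ be a Hilbert space and U, R Hilbert spaces, and b(τ; v, s) a bounded bilinear form on Σ × (U × R). Suppose for every u ∈ U there exists η ∈ Σ with B₁(η) = u (where B₁: Σ → U is a bounded linear operator), ‖η‖_Σ ≤ C₁‖u‖_U, and suppose for every r ∈ R there exists ξ ∈ Σ with B₁(ξ) = 0, B₂(ξ) = r (B₂: Σ → R bounded linear), and ‖ξ‖_Σ ≤ C₂‖r‖_R, where also ‖B₂‖ ≤ C₃. If b(τ; v, s) = ⟨B₁ τ, v⟩_U + ⟨B₂ τ, s⟩_R, then b satisfies the inf-sup condition: for every (u, r) ∈ U × R, sup_{τ ≠ 0} b(τ; u, r)/‖τ‖_Σ ≥ c (‖u‖_U + ‖r‖_R) for a constant c > 0 depending only on C₁, C₂, C₃. -/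

import Mathlib

/-! Given `u` and `r`, first lift `u` through `B₁` to `η`, then correct the `R`-component by a
lift `ξ ∈ ker B₁` of `r - B₂ η`. The element `τ = η + ξ` maps to `(u, r)` and has norm
`O(‖u‖ + ‖r‖)`, while `b(τ; u, r) = ‖u‖² + ‖r‖² ≥ (‖u‖ + ‖r‖)² / 2`. -/

lemma bddAbove_range_apply_div_norm {E : Type*} [NormedAddCommGroup E] [NormedSpace ℝ E]
    (ℓ : E →L[ℝ] ℝ) : BddAbove (Set.range fun x => ℓ x / ‖x‖) := by
  refine ⟨‖ℓ‖, ?_⟩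
  rintro _ ⟨x, rfl⟩
  calc ℓ x / ‖x‖ ≤ ‖ℓ x‖ / ‖x‖ := by gcongr; exact Real.le_norm_self _
    _ ≤ ‖ℓ‖ := ℓ.ratio_le_opNorm x

lemma exists_preimage_pair_norm_le {X U R : Type*}
    [NormedAddCommGroup X] [NormedSpace ℝ X] [NormedAddCommGroup U] [NormedSpace ℝ U]
    [NormedAddCommGroup R] [NormedSpace ℝ R]
    (B₁ : X →L[ℝ] U) (B₂ : X →L[ℝ] R) {C₁ C₂ C₃ : ℝ} (hC₁ : 0 ≤ C₁) (hC₂ : 0 ≤ C₂)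
    (h1 : ∀ u : U, ∃ η : X, B₁ η = u ∧ ‖η‖ ≤ C₁ * ‖u‖)
    (h2 : ∀ r : R, ∃ ξ : X, B₁ ξ = 0 ∧ B₂ ξ = r ∧ ‖ξ‖ ≤ C₂ * ‖r‖)
    (h3 : ‖B₂‖ ≤ C₃) (u : U) (r : R) :
    ∃ τ : X, B₁ τ = u ∧ B₂ τ = r ∧ ‖τ‖ ≤ (C₁ * (1 + C₂ * C₃) + C₂) * (‖u‖ + ‖r‖) := by
  obtain ⟨η, hη, hη_le⟩ := h1 u
  obtain ⟨ξ, hξ₁, hξ₂, hξ_le⟩ := h2 (r - B₂ η)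
  refine ⟨η + ξ, by simp [hη, hξ₁], by simp [hξ₂], ?_⟩
  have hC₃ : 0 ≤ C₃ := (norm_nonneg B₂).trans h3
  have hB₂η : ‖B₂ η‖ ≤ C₃ * (C₁ * ‖u‖) :=
    (B₂.le_opNorm η).trans (mul_le_mul h3 hη_le (norm_nonneg η) hC₃)
  have hξ_le' : ‖ξ‖ ≤ C₂ * (‖r‖ + C₃ * (C₁ * ‖u‖)) :=
    hξ_le.trans (by gcongr; exact (norm_sub_le r (B₂ η)).trans (by gcongr))
  have hu := norm_nonneg u
  have hr := norm_nonneg r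
  calc ‖η + ξ‖ ≤ ‖η‖ + ‖ξ‖ := norm_add_le η ξ
    _ ≤ C₁ * ‖u‖ + C₂ * (‖r‖ + C₃ * (C₁ * ‖u‖)) := add_le_add hη_le hξ_le'
    _ ≤ (C₁ * (1 + C₂ * C₃) + C₂) * (‖u‖ + ‖r‖) := by
      nlinarith [mul_nonneg hC₂ hu, mul_nonneg hC₁ hr,
        mul_nonneg (mul_nonneg hC₁ (mul_nonneg hC₂ hC₃)) hr]

lemma le_iSup_inner_div_norm_of_exists_preimage {X U R : Type*}
    [NormedAddCommGroup X] [NormedSpace ℝ X] [NormedAddCommGroup U] [InnerProductSpace ℝ U]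
    [NormedAddCommGroup R] [InnerProductSpace ℝ R]
    (B₁ : X →L[ℝ] U) (B₂ : X →L[ℝ] R) {K : ℝ} (hK : 0 < K) (u : U) (r : R)
    (h : ∃ τ : X, B₁ τ = u ∧ B₂ τ = r ∧ ‖τ‖ ≤ K * (‖u‖ + ‖r‖)) :
    1 / (2 * K) * (‖u‖ + ‖r‖) ≤
      ⨆ τ : X, ((inner ℝ (B₁ τ) u : ℝ) + (inner ℝ (B₂ τ) r : ℝ)) / ‖τ‖ := by
  obtain ⟨τ, rfl, rfl, hτ⟩ := h
  let ℓ : X →L[ℝ] ℝ := (innerSL ℝ (B₁ τ)).comp B₁ + (innerSL ℝ (B₂ τ)).comp B₂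
  have hℓ : ∀ σ, ℓ σ = inner ℝ (B₁ σ) (B₁ τ) + inner ℝ (B₂ σ) (B₂ τ) := fun σ => by
    simp [ℓ, real_inner_comm]
  have hsup := le_ciSup (bddAbove_range_apply_div_norm ℓ) τ
  simp only [hℓ] at hsup
  refine le_trans ?_ hsup
  rw [real_inner_self_eq_norm_sq, real_inner_self_eq_norm_sq]
  rcases eq_or_ne τ 0 with rfl | hτ₀
  · simp
  rw [le_div_iff₀ (norm_pos_iff.mpr hτ₀)]
  set s := ‖B₁ τ‖ + ‖B₂ τ‖
  calc 1 / (2 * K) * s * ‖τ‖ ≤ 1 / (2 * K) * s * (K * s) := by gcongr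
    _ = s ^ 2 / 2 := by field_simp
    _ ≤ ‖B₁ τ‖ ^ 2 + ‖B₂ τ‖ ^ 2 := by nlinarith [sq_nonneg (‖B₁ τ‖ - ‖B₂ τ‖)]

theorem stmt_9_general {X U R : Type*}
    [NormedAddCommGroup X] [InnerProductSpace ℝ X]
    [NormedAddCommGroup U] [InnerProductSpace ℝ U]
    [NormedAddCommGroup R] [InnerProductSpace ℝ R]
    (B₁ : X →L[ℝ] U) (B₂ : X →L[ℝ] R)
    (C₁ C₂ C₃ : ℝ) (hC₁ : 0 < C₁) (hC₂ : 0 < C₂)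
    (h1 : ∀ u : U, ∃ η : X, B₁ η = u ∧ ‖η‖ ≤ C₁ * ‖u‖)
    (h2 : ∀ r : R, ∃ ξ : X, B₁ ξ = 0 ∧ B₂ ξ = r ∧ ‖ξ‖ ≤ C₂ * ‖r‖)
    (h3 : ‖B₂‖ ≤ C₃) :
    ∃ c > 0, ∀ (u : U) (r : R),
      c * (‖u‖ + ‖r‖) ≤
        ⨆ τ : X, ((inner ℝ (B₁ τ) u : ℝ) + (inner ℝ (B₂ τ) r : ℝ)) / ‖τ‖ := by
  have hC₃ : 0 ≤ C₃ := (norm_nonneg B₂).trans h3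
  have hK : 0 < C₁ * (1 + C₂ * C₃) + C₂ := by positivity
  exact ⟨1 / (2 * (C₁ * (1 + C₂ * C₃) + C₂)), by positivity, fun u r =>
    le_iSup_inner_div_norm_of_exists_preimage B₁ B₂ hK u r
      (exists_preimage_pair_norm_le B₁ B₂ hC₁.le hC₂.le h1 h2 h3 u r)⟩

/-- Inf-sup from two constructions: if `B₁ : Σ → U` admits a bounded right
inverse and `B₂ : Σ → R` admits a bounded right inverse with values in the
kernel of `B₁`, then `b(τ; v, s) = ⟨B₁ τ, v⟩ + ⟨B₂ τ, s⟩` satisfies the inf-sup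
condition with a constant depending only on `C₁, C₂, C₃`. -/
theorem stmt_9 {X U R : Type*}
    [NormedAddCommGroup X] [InnerProductSpace ℝ X] [CompleteSpace X]
    [NormedAddCommGroup U] [InnerProductSpace ℝ U] [CompleteSpace U]
    [NormedAddCommGroup R] [InnerProductSpace ℝ R] [CompleteSpace R]
    (B₁ : X →L[ℝ] U) (B₂ : X →L[ℝ] R)
    (C₁ C₂ C₃ : ℝ) (hC₁ : 0 < C₁) (hC₂ : 0 < C₂) (hC₃ : 0 < C₃)
    (h1 : ∀ u : U, ∃ η : X, B₁ η = u ∧ ‖η‖ ≤ C₁ * ‖u‖)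
    (h2 : ∀ r : R, ∃ ξ : X, B₁ ξ = 0 ∧ B₂ ξ = r ∧ ‖ξ‖ ≤ C₂ * ‖r‖)
    (h3 : ‖B₂‖ ≤ C₃) :
    ∃ c > 0, ∀ (u : U) (r : R),
      c * (‖u‖ + ‖r‖) ≤
        ⨆ τ : X, ((inner ℝ (B₁ τ) u : ℝ) + (inner ℝ (B₂ τ) r : ℝ)) / ‖τ‖ :=
  stmt_9_general B₁ B₂ C₁ C₂ C₃ hC₁ hC₂ h1 h2 h3
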